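/- arXiv:2602.19978 — 4 statements merged into one kernel-verified Lean document; each statement's English description precedes it below -/
import Mathlib

section
/- Suppose ℓ ∈ A_1 is a strong Lefschetz element of A and let j > 0 be an integer. Then the image of ℓ is a strong Lefschetz element of A/(0 :_A (ℓ^j)); concretely, for all integers i, k ≥ 0, either every a ∈ A_i with ℓ^{j+k} a = 0 satisfies ℓ^j a = 0, or for every b ∈ A_{i+k} there exists a ∈ A_i with ℓ^j b = ℓ^{j+k} a. -/
theorem SetLike.pow_mul_mem_graded_of_mem_one {σ A : Type*} [Semiring A] [SetLike σ A]
    {𝒜 : ℕ → σ} [SetLike.GradedMonoid 𝒜] {l b : A} (hl : l ∈ 𝒜 1) {i : ℕ} (hb : b ∈ 𝒜 i)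
    (n : ℕ) : l ^ n * b ∈ 𝒜 (i + n) := by
  have h := SetLike.mul_mem_graded (SetLike.pow_mem_graded n hl) hb
  rwa [smul_eq_mul, mul_one, add_comm] at h

theorem stmt10_general (k A : Type) [Field k] [CommRing A] [Algebra k A]
    (𝒜 : ℕ → Submodule k A) [GradedAlgebra 𝒜]
    (l : A) (hl : l ∈ 𝒜 1)
    (hSL : ∀ i j : ℕ, (∀ a ∈ 𝒜 i, l ^ j * a = 0 → a = 0) ∨
      (∀ b ∈ 𝒜 (i + j), ∃ a ∈ 𝒜 i, l ^ j * a = b))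
    (j : ℕ) :
    ∀ i c : ℕ,
      (∀ a ∈ 𝒜 i, l ^ (j + c) * a = 0 → l ^ j * a = 0) ∨
      (∀ b ∈ 𝒜 (i + c), ∃ a ∈ 𝒜 i, l ^ j * b = l ^ (j + c) * a) := by
  intro i c
  rcases hSL i (j + c) with injective | surjective
  · exact Or.inl fun a ha hla ↦ by rw [injective a ha hla, mul_zero]
  · refine Or.inr fun b hb ↦ ?_
    have hlb : l ^ j * b ∈ 𝒜 (i + (j + c)) := by
      simpa only [Nat.add_right_comm i c j, Nat.add_assoc, Nat.add_comm c j] using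
        SetLike.pow_mul_mem_graded_of_mem_one hl hb j
    obtain ⟨a, ha, hab⟩ := surjective _ hlb
    exact ⟨a, ha, hab.symm⟩

/-- If `ℓ ∈ A_1` is a strong Lefschetz element of a graded Artinian `k`-algebra `A`
(char `k` = 0, `A_0 = k`) and `j > 0`, then the image of `ℓ` is a strong Lefschetz
element of `A/(0 : (ℓ^j))`: for all `i, c ≥ 0`, either every `a ∈ A_i` with
`ℓ^{j+c} a = 0` satisfies `ℓ^j a = 0`, or for every `b ∈ A_{i+c}` there is `a ∈ A_i`
with `ℓ^j b = ℓ^{j+c} a`. -/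
theorem stmt10 (k A : Type) [Field k] [CharZero k] [CommRing A] [Algebra k A]
    (𝒜 : ℕ → Submodule k A) [GradedAlgebra 𝒜] [FiniteDimensional k A]
    (h0 : ∀ a ∈ 𝒜 0, ∃ c : k, algebraMap k A c = a)
    (l : A) (hl : l ∈ 𝒜 1)
    (hSL : ∀ i j : ℕ, (∀ a ∈ 𝒜 i, l ^ j * a = 0 → a = 0) ∨
      (∀ b ∈ 𝒜 (i + j), ∃ a ∈ 𝒜 i, l ^ j * a = b))
    (j : ℕ) (hj : 0 < j) :
    ∀ i c : ℕ,
      (∀ a ∈ 𝒜 i, l ^ (j + c) * a = 0 → l ^ j * a = 0) ∨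
      (∀ b ∈ 𝒜 (i + c), ∃ a ∈ 𝒜 i, l ^ j * b = l ^ (j + c) * a) :=
  stmt10_general k A 𝒜 l hl hSL j
end

section
/- Let d_1,…,d_{n+1} be positive integers and G = (x_1^{d_1},…,x_n^{d_n}) : (ℓ^{d_{n+1}}) ⊆ R. Then R/G has the strong Lefschetz property with ℓ as a strong Lefschetz element. -/
/-!
Let `A = k[x₁, …, xₙ] / (x₁^{e₁}, …, xₙ^{eₙ})` and `s = ∑ⱼ (eⱼ - 1)`. Multiplication by `ℓ` and the
operator `F = ∑ⱼ (eⱼ ∂ⱼ - ∂ⱼ xⱼ ∂ⱼ)` (which preserves the ideal) satisfy `[ℓ, F] = 2 i - s` on `Aᵢ`,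
so they make `A` an `𝔰𝔩₂`-module whose weight spaces are the graded pieces. The usual `𝔰𝔩₂`
argument gives hard Lefschetz: `ℓ ^ (s - 2 i) : Aᵢ → A_{s-i}` is bijective.

With `D = d_{n+1}`, a form `f` lies in `G` iff `ℓ ^ D f = 0` in `A`. Hence `ℓ ^ c` is injective on
`(R/G)ᵢ` when `2 i + c + D ≤ s`, as `ℓ ^ (c + D)` is then injective on `Aᵢ`; otherwise it is
surjective, because hard Lefschetz gives `ℓ ^ D A_{i+c} ⊆ ℓ ^ (D + c) Aᵢ`.
-/

open MvPolynomial Set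

/-- `Q i` is the weight space of weight `2 i - s` of an `𝔰𝔩₂`-module with raising operator `E`
and lowering operator `F`. The grading is indexed by `ℤ` so that it can be reflected by
`i ↦ s - i` (`IsSl2Grading.reverse`). -/
structure IsSl2Grading {k V : Type*} [Field k] [AddCommGroup V] [Module k V]
    (E F : Module.End k V) (Q : ℤ → Submodule k V) (s : ℤ) : Prop where
  mapsTo_raise : ∀ i, MapsTo E (Q i) (Q (i + 1))
  mapsTo_lower : ∀ i, MapsTo F (Q i) (Q (i - 1))
  eq_bot_of_neg : ∀ i < 0, Q i = ⊥
  eq_bot_of_gt : ∀ i, s < i → Q i = ⊥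
  commutator_eq : ∀ i, ∀ v ∈ Q i, E (F v) - F (E v) = ((2 * i - s : ℤ) : k) • v

namespace IsSl2Grading

variable {k V : Type*} [Field k] [AddCommGroup V] [Module k V]
  {E F : Module.End k V} {Q : ℤ → Submodule k V} {s : ℤ}

theorem reverse (h : IsSl2Grading E F Q s) : IsSl2Grading F E (fun j => Q (s - j)) s where
  mapsTo_raise j := by convert h.mapsTo_lower (s - j) using 3; ring
  mapsTo_lower j := by convert h.mapsTo_raise (s - j) using 3; ring
  eq_bot_of_neg j hj := h.eq_bot_of_gt _ (by omega)
  eq_bot_of_gt j hj := h.eq_bot_of_neg _ (by omega)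
  commutator_eq j v hv := by
    rw [← neg_sub, h.commutator_eq _ v hv, ← neg_smul, ← Int.cast_neg]
    congr 3
    ring

theorem mapsTo_raise_pow (h : IsSl2Grading E F Q s) (m : ℕ) (i : ℤ) :
    MapsTo (E ^ m) (Q i) (Q (i + m)) := by
  induction m with
  | zero => intro v hv; simpa using hv
  | succ m ih =>
    rw [pow_succ', Module.End.coe_mul, Nat.cast_succ, ← add_assoc]
    exact (h.mapsTo_raise _).comp ih

theorem mapsTo_lower_pow (h : IsSl2Grading E F Q s) (m : ℕ) (i : ℤ) :
    MapsTo (F ^ m) (Q (i + m)) (Q i) := by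
  convert h.reverse.mapsTo_raise_pow m (s - (i + m)) using 3 <;> ring

theorem lower_raise (h : IsSl2Grading E F Q s) {i : ℤ} {v : V} (hv : v ∈ Q i) :
    F (E v) = E (F v) - ((2 * i - s : ℤ) : k) • v := by
  rw [← h.commutator_eq i v hv, sub_sub_cancel]

theorem lower_raise_pow (h : IsSl2Grading E F Q s) {i : ℤ} {v : V} (hv : v ∈ Q i) (m : ℕ) :
    F ((E ^ (m + 1)) v) =
      (E ^ (m + 1)) (F v) - (((m + 1) * (2 * i + m - s) : ℤ) : k) • (E ^ m) v := by
  induction m with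
  | zero => simpa using h.lower_raise hv
  | succ m ih =>
    rw [pow_succ' E (m + 1), Module.End.mul_apply, h.lower_raise (h.mapsTo_raise_pow _ _ hv), ih,
      map_sub, map_smul, ← Module.End.mul_apply, ← pow_succ', ← Module.End.mul_apply E, ← pow_succ']
    push_cast
    module

section CharZero

variable [CharZero k]

theorem raise_pow_eq_zero_of_succ (h : IsSl2Grading E F Q s) {i : ℤ} {m : ℕ} (hm : 2 * i + m < s)
    {v : V} (hv : v ∈ Q i) (hlow : F v = 0) (hz : (E ^ (m + 1)) v = 0) : (E ^ m) v = 0 := by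
  have key := h.lower_raise_pow hv m
  rw [hz, hlow, map_zero, map_zero, zero_sub, eq_comm, neg_eq_zero, smul_eq_zero] at key
  exact key.resolve_left (Int.cast_ne_zero.mpr (mul_ne_zero (by omega) (by omega)))

theorem eq_zero_of_lower_eq_zero (h : IsSl2Grading E F Q s) {i : ℤ} {m : ℕ} (hm : 2 * i + m ≤ s)
    {v : V} (hv : v ∈ Q i) (hlow : F v = 0) (hz : (E ^ m) v = 0) : v = 0 := by
  induction m with
  | zero => simpa using hz
  | succ m ih => exact ih (by omega) (h.raise_pow_eq_zero_of_succ (by omega) hv hlow hz)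

/-- By induction on `i`, `F v` is killed by `E ^ (m + 2)`, hence vanishes, and then `v` is a
lowest weight vector. -/
theorem eq_zero_of_raise_pow_eq_zero (h : IsSl2Grading E F Q s) {i : ℤ} {m : ℕ}
    (hm : 2 * i + m ≤ s) {v : V} (hv : v ∈ Q i) (hz : (E ^ m) v = 0) : v = 0 := by
  rcases lt_or_ge i (-1) with hi | hi
  · simpa [h.eq_bot_of_neg i (by omega)] using hv
  induction i, hi using Int.leInduction generalizing m v with
  | base => simpa [h.eq_bot_of_neg (-1) (by omega)] using hv
  | succ i _ ih =>
    refine h.eq_zero_of_lower_eq_zero hm hv (ih (m := m + 2) (by omega) ?_ ?_) hz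
    · simpa using h.mapsTo_lower _ hv
    · simpa [pow_succ', hz, eq_comm] using h.lower_raise_pow hv (m + 1)

/-- Hard Lefschetz. Surjectivity comes from the injectivity of `F ^ m` in the other direction. -/
theorem exists_raise_pow_eq (h : IsSl2Grading E F Q s) {i : ℤ} {m : ℕ} (hm : 2 * i + m = s)
    [FiniteDimensional k (Q i)] {w : V} (hw : w ∈ Q (i + m)) : ∃ v ∈ Q i, (E ^ m) v = w := by
  let φ : Q i →ₗ[k] Q (i + m) := (E ^ m).restrict fun _ hv => h.mapsTo_raise_pow m i hv
  let ψ : Q (i + m) →ₗ[k] Q i := (F ^ m).restrict fun _ hv => h.mapsTo_lower_pow m i hv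
  have hφ : Function.Injective φ := by
    rw [← LinearMap.ker_eq_bot, LinearMap.ker_eq_bot']
    exact fun v hv => Subtype.ext (h.eq_zero_of_raise_pow_eq_zero hm.le v.2 congr($hv.1))
  have hψ : Function.Injective ψ := by
    rw [← LinearMap.ker_eq_bot, LinearMap.ker_eq_bot']
    refine fun v hv => Subtype.ext (h.reverse.eq_zero_of_raise_pow_eq_zero (i := s - (i + m))
      (by omega) (by rw [sub_sub_cancel]; exact v.2) congr($hv.1))
  have : FiniteDimensional k (Q (i + m)) := .of_injective ψ hψ
  obtain ⟨v, hv⟩ := (LinearMap.injective_iff_surjective_of_finrank_eq_finrank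
    (le_antisymm (LinearMap.finrank_le_finrank_of_injective hφ)
      (LinearMap.finrank_le_finrank_of_injective hψ))).mp hφ ⟨w, hw⟩
  exact ⟨v, v.2, congr($hv.1)⟩

theorem exists_raise_pow_eq_of_le (h : IsSl2Grading E F Q s) [∀ j, FiniteDimensional k (Q j)]
    {i : ℤ} {m : ℕ} (hm : s ≤ 2 * i + m) {w : V} (hw : w ∈ Q (i + m)) :
    ∃ v ∈ Q i, (E ^ m) v = w := by
  obtain ⟨p, hp⟩ := Int.eq_ofNat_of_zero_le (sub_nonneg.mpr hm)
  obtain ⟨u, hu, rfl⟩ := h.exists_raise_pow_eq (i := i - p) (m := m + p) (by push_cast; omega)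
    (by convert hw using 2; push_cast; ring)
  refine ⟨(E ^ p) u, by simpa using h.mapsTo_raise_pow p _ hu, ?_⟩
  rw [← Module.End.mul_apply, ← pow_add]

theorem exists_raise_pow_add_eq (h : IsSl2Grading E F Q s) [∀ j, FiniteDimensional k (Q j)]
    {i : ℤ} {c m : ℕ} (hm : s ≤ 2 * i + c + m) {w : V} (hw : w ∈ Q (i + c)) :
    ∃ v ∈ Q i, (E ^ (m + c)) v = (E ^ m) w := by
  -- `E ^ t` moves `w` into a degree that `E ^ (c + t)` maps `Q i` onto.
  obtain ⟨t, htm, hts⟩ : ∃ t : ℕ, t ≤ m ∧ s ≤ 2 * i + c + t :=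
    ⟨(s - 2 * i - c).toNat, by omega, by omega⟩
  obtain ⟨r, rfl⟩ := Nat.exists_eq_add_of_le' htm
  have hEw := h.mapsTo_raise_pow t _ hw
  rw [add_assoc, ← Nat.cast_add] at hEw
  obtain ⟨v, hv, hvw⟩ := h.exists_raise_pow_eq_of_le (by push_cast; omega) hEw
  refine ⟨v, hv, ?_⟩
  rw [add_assoc, add_comm t c, pow_add, Module.End.mul_apply, hvw, ← Module.End.mul_apply,
    ← pow_add]

end CharZero

end IsSl2Grading

namespace MvPolynomial

section CommSemiring

variable {R σ : Type*} [CommSemiring R]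

noncomputable def xPowIdeal (e : σ → ℕ) : Ideal (MvPolynomial σ R) :=
  Ideal.span (range fun j => X j ^ e j)

theorem mem_xPowIdeal_iff {e : σ → ℕ} {f : MvPolynomial σ R} :
    f ∈ xPowIdeal e ↔ ∀ a ∈ f.support, ∃ j, e j ≤ a j := by
  have hgen : (range fun j => (X j ^ e j : MvPolynomial σ R)) =
      (fun a => monomial a 1) '' range fun j => Finsupp.single j (e j) := by
    rw [← range_comp]
    congr 1
    funext j
    exact X_pow_eq_monomial
  simp [xPowIdeal, hgen, mem_ideal_span_monomial_image, Finsupp.single_le_iff]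

theorem monomial_mem_xPowIdeal {e : σ → ℕ} {a : σ →₀ ℕ} {j : σ} (h : e j ≤ a j) (r : R) :
    monomial a r ∈ xPowIdeal e :=
  mem_xPowIdeal_iff.mpr fun b hb =>
    ⟨j, by rwa [Finset.mem_singleton.mp (support_monomial_subset hb)]⟩

theorem IsHomogeneous.mem_xPowIdeal [Fintype σ] {e : σ → ℕ} {f : MvPolynomial σ R} {i : ℕ}
    (hf : f.IsHomogeneous i) (hi : ∑ j, ((e j : ℤ) - 1) < i) : f ∈ xPowIdeal e := by
  refine mem_xPowIdeal_iff.mpr fun a ha => ?_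
  by_contra! hlt
  have hdeg : (i : ℤ) = ∑ j, (a j : ℤ) := by
    rw [← Nat.cast_sum, ← Finsupp.degree_eq_sum, Finsupp.degree_eq_weight_one]
    exact congrArg _ (hf (mem_support_iff.mp ha)).symm
  have : ∑ j, (a j : ℤ) ≤ ∑ j, ((e j : ℤ) - 1) :=
    Finset.sum_le_sum fun j _ => by have := hlt j; omega
  omega

end CommSemiring

section CommRing

variable {R σ : Type*} [CommRing R]

theorem mul_sub_pderiv_X_mul_pderiv {ℓ : MvPolynomial σ R} {j : σ} (hℓ : pderiv j ℓ = 1) (c : R)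
    (f : MvPolynomial σ R) :
    ℓ * (c • pderiv j f - pderiv j (X j * pderiv j f)) -
        (c • pderiv j (ℓ * f) - pderiv j (X j * pderiv j (ℓ * f))) =
      2 • (X j * pderiv j f) - (c - 1) • f := by
  simp only [pderiv_mul, hℓ, pderiv_X_self, smul_eq_C_mul, map_add, map_sub, map_one, pderiv_one]
  ring

variable [Fintype σ]

/-- The lowering operator of the `𝔰𝔩₂`-action on `⊗ⱼ R[xⱼ]/(xⱼ ^ eⱼ)` in which multiplication by
`∑ⱼ xⱼ` is the raising operator. -/
noncomputable def lowering (e : σ → ℕ) : Module.End R (MvPolynomial σ R) :=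
  ∑ j, (e j • (pderiv j).toLinearMap -
    (pderiv j).toLinearMap ∘ₗ LinearMap.mulLeft R (X j) ∘ₗ (pderiv j).toLinearMap)

variable {e : σ → ℕ}

theorem lowering_apply (f : MvPolynomial σ R) :
    lowering e f = ∑ j, (e j • pderiv j f - pderiv j (X j * pderiv j f)) := by
  simp [lowering]

theorem lowering_monomial (a : σ →₀ ℕ) (r : R) :
    lowering e (monomial a r) =
      ∑ j, monomial (a - Finsupp.single j 1) (((e j : R) - a j) * a j * r) := by
  refine (lowering_apply _).trans (Finset.sum_congr rfl fun j _ => ?_)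
  rw [X_mul_pderiv_monomial, map_nsmul, pderiv_monomial, ← map_nsmul, ← map_nsmul, ← map_sub]
  congr 1
  simp only [nsmul_eq_mul]
  ring

theorem IsHomogeneous.lowering {f : MvPolynomial σ R} {i : ℕ} (hf : f.IsHomogeneous (i + 1)) :
    (lowering e f).IsHomogeneous i := by
  rw [lowering_apply]
  refine IsHomogeneous.sum _ _ _ fun j _ => ?_
  have h1 : (pderiv j f).IsHomogeneous i := hf.pderiv
  have h2 : (pderiv j (X j * pderiv j f)).IsHomogeneous i := by
    simpa using ((isHomogeneous_X R j).mul h1).pderiv (i := j)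
  rw [← mem_homogeneousSubmodule] at h1 h2 ⊢
  exact sub_mem (nsmul_mem h1 _) h2

theorem lowering_eq_zero_of_isHomogeneous_zero {f : MvPolynomial σ R} (hf : f.IsHomogeneous 0) :
    lowering e f = 0 := by
  rw [← totalDegree_zero_iff_isHomogeneous, totalDegree_eq_zero_iff_eq_C] at hf
  rw [hf, lowering_apply]
  simp

theorem lowering_mem_xPowIdeal {f : MvPolynomial σ R} (hf : f ∈ xPowIdeal e) :
    lowering e f ∈ xPowIdeal e := by
  classical
  rw [f.as_sum, map_sum]
  refine Ideal.sum_mem _ fun a ha => ?_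
  obtain ⟨t, ht⟩ := mem_xPowIdeal_iff.mp hf a ha
  rw [lowering_monomial]
  refine Ideal.sum_mem _ fun j _ => ?_
  rcases eq_or_ne j t with rfl | hne
  · rcases ht.eq_or_lt with hea | hlt
    · simp [hea]
    · refine monomial_mem_xPowIdeal (j := j) ?_ _
      rw [Finsupp.tsub_apply, Finsupp.single_eq_same]
      omega
  · refine monomial_mem_xPowIdeal (j := t) ?_ _
    rwa [Finsupp.tsub_apply, Finsupp.single_eq_of_ne hne.symm, Nat.sub_zero]

theorem sum_X_mul_lowering_sub {f : MvPolynomial σ R} {i : ℕ} (hf : f.IsHomogeneous i) :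
    (∑ u, X u) * lowering e f - lowering e ((∑ u, X u) * f) =
      (2 * i - ∑ j, ((e j : ℤ) - 1)) • f := by
  have hℓ : ∀ j, pderiv j (∑ u, X u : MvPolynomial σ R) = 1 := by
    intro j
    classical simp [pderiv_X, Pi.single_apply]
  simp only [lowering_apply, Finset.mul_sum, ← Finset.sum_sub_distrib, ← Nat.cast_smul_eq_nsmul R,
    mul_sub_pderiv_X_mul_pderiv (hℓ _)]
  rw [Finset.sum_sub_distrib, ← Finset.smul_sum, hf.sum_X_mul_pderiv, ← Finset.sum_smul,
    ← Int.cast_smul_eq_zsmul R, ← Nat.cast_smul_eq_nsmul R i]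
  push_cast
  module

end CommRing

variable (k : Type*) {σ : Type*} [Field k] (e : σ → ℕ)

abbrev XPowQuotient : Type _ :=
  MvPolynomial σ k ⧸ (xPowIdeal e : Ideal (MvPolynomial σ k)).restrictScalars k

namespace XPowQuotient

noncomputable def grading (t : ℤ) : Submodule k (XPowQuotient k e) :=
  if 0 ≤ t then (homogeneousSubmodule σ k t.toNat).map (Submodule.mkQ _) else ⊥

variable {k e}

theorem mk_eq_zero_iff {f : MvPolynomial σ k} :
    (Submodule.Quotient.mk f : XPowQuotient k e) = 0 ↔ f ∈ xPowIdeal e := by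
  rw [Submodule.Quotient.mk_eq_zero, Submodule.restrictScalars_mem]

theorem grading_of_neg {t : ℤ} (ht : t < 0) : grading k e t = ⊥ :=
  if_neg (by omega)

theorem mem_grading_natCast {i : ℕ} {v : XPowQuotient k e} :
    v ∈ grading k e i ↔
      ∃ f : MvPolynomial σ k, f.IsHomogeneous i ∧ Submodule.Quotient.mk f = v := by
  simp [grading, mem_homogeneousSubmodule]

theorem eq_zero_or_exists_of_mem_grading {t : ℤ} {v : XPowQuotient k e} (hv : v ∈ grading k e t) :
    v = 0 ∨ ∃ (i : ℕ) (f : MvPolynomial σ k), (i : ℤ) = t ∧ f.IsHomogeneous i ∧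
      Submodule.Quotient.mk f = v := by
  rcases lt_or_ge t 0 with ht | ht
  · rw [grading_of_neg ht, Submodule.mem_bot] at hv
    exact .inl hv
  lift t to ℕ using ht
  exact .inr ⟨t, mem_grading_natCast.mp hv |>.imp fun _ => And.intro rfl⟩

instance [Finite σ] (t : ℤ) : FiniteDimensional k (grading k e t) := by
  have : FiniteDimensional k (homogeneousSubmodule σ k t.toNat) :=
    Module.Finite.iff_fg.mpr (homogeneousSubmodule_fg _ _ _)
  refine Submodule.finiteDimensional_of_le
    (S₂ := (homogeneousSubmodule σ k t.toNat).map (Submodule.mkQ _)) ?_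
  unfold grading
  split_ifs
  exacts [le_rfl, bot_le]

variable (k e) [Fintype σ]

noncomputable def raise : Module.End k (XPowQuotient k e) :=
  Submodule.mapQ _ _ (LinearMap.mulLeft k (∑ j, X j)) fun _ hf => Ideal.mul_mem_left _ _ hf

noncomputable def lower : Module.End k (XPowQuotient k e) :=
  Submodule.mapQ _ _ (lowering e) fun _ hf => lowering_mem_xPowIdeal hf

variable {k e}

theorem raise_mk (f : MvPolynomial σ k) :
    raise k e (Submodule.Quotient.mk f) =
      (Submodule.Quotient.mk ((∑ j, X j) * f) : XPowQuotient k e) :=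
  rfl

theorem raise_pow_mk (m : ℕ) (f : MvPolynomial σ k) :
    (raise k e ^ m) (Submodule.Quotient.mk f) =
      (Submodule.Quotient.mk ((∑ j, X j) ^ m * f) : XPowQuotient k e) := by
  induction m with
  | zero => simp
  | succ m ih => rw [pow_succ', Module.End.mul_apply, ih, raise_mk, pow_succ', mul_assoc]

theorem lower_mk (f : MvPolynomial σ k) :
    lower k e (Submodule.Quotient.mk f) =
      (Submodule.Quotient.mk (lowering e f) : XPowQuotient k e) :=
  rfl

theorem isSl2Grading :
    IsSl2Grading (raise k e) (lower k e) (grading k e) (∑ j, ((e j : ℤ) - 1)) where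
  mapsTo_raise t v hv := by
    obtain rfl | ⟨i, f, rfl, hf, rfl⟩ := eq_zero_or_exists_of_mem_grading hv
    · simp
    · have hℓ : (∑ j, X j : MvPolynomial σ k).IsHomogeneous 1 :=
        IsHomogeneous.sum _ _ _ fun j _ => isHomogeneous_X k j
      refine mem_grading_natCast.mpr ⟨(∑ j, X j) * f, ?_, (raise_mk f).symm⟩
      simpa [add_comm] using hℓ.mul hf
  mapsTo_lower t v hv := by
    obtain rfl | ⟨_ | i, f, rfl, hf, rfl⟩ := eq_zero_or_exists_of_mem_grading hv
    · simp
    · simp [lower_mk, lowering_eq_zero_of_isHomogeneous_zero hf]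
    · simpa [lower_mk] using mem_grading_natCast.mpr ⟨_, hf.lowering, rfl⟩
  eq_bot_of_neg _ ht := grading_of_neg ht
  eq_bot_of_gt t hst := by
    refine eq_bot_iff.mpr fun v hv => ?_
    obtain rfl | ⟨i, f, rfl, hf, rfl⟩ := eq_zero_or_exists_of_mem_grading hv
    · rfl
    · exact mk_eq_zero_iff.mpr (hf.mem_xPowIdeal hst)
  commutator_eq t v hv := by
    obtain rfl | ⟨i, f, rfl, hf, rfl⟩ := eq_zero_or_exists_of_mem_grading hv
    · simp
    · rw [lower_mk, raise_mk, raise_mk, lower_mk, ← Submodule.Quotient.mk_sub,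
        sum_X_mul_lowering_sub hf, Int.cast_smul_eq_zsmul, Submodule.Quotient.mk_smul]

end XPowQuotient

open XPowQuotient

variable {k e} [Fintype σ]

theorem mem_colon_iff_raise_pow_eq_zero {D : ℕ} {f : MvPolynomial σ k} :
    f ∈ (xPowIdeal e).colon (Ideal.span {(∑ j, X j) ^ D} : Ideal (MvPolynomial σ k)) ↔
      (raise k e ^ D) (Submodule.Quotient.mk f) = 0 := by
  rw [Ideal.mem_colon_span_singleton, raise_pow_mk, mk_eq_zero_iff, mul_comm]

variable [CharZero k]

theorem mem_colon_of_pow_mul_mem {i c D : ℕ} (hs : 2 * i + c + D ≤ ∑ j, ((e j : ℤ) - 1))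
    {f : MvPolynomial σ k} (hf : f.IsHomogeneous i)
    (hcf : (∑ j, X j) ^ c * f ∈
      (xPowIdeal e).colon (Ideal.span {(∑ j, X j) ^ D} : Ideal (MvPolynomial σ k))) :
    f ∈ (xPowIdeal e).colon (Ideal.span {(∑ j, X j) ^ D} : Ideal (MvPolynomial σ k)) := by
  rw [mem_colon_iff_raise_pow_eq_zero, ← raise_pow_mk, ← Module.End.mul_apply, ← pow_add] at hcf
  have hf0 := isSl2Grading.eq_zero_of_raise_pow_eq_zero (by push_cast; omega)
    (mem_grading_natCast.mpr ⟨f, hf, rfl⟩) hcf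
  rw [mem_colon_iff_raise_pow_eq_zero, hf0, map_zero]

theorem exists_sub_pow_mul_mem_colon {i c D : ℕ} (hs : ∑ j, ((e j : ℤ) - 1) ≤ 2 * i + c + D)
    {g : MvPolynomial σ k} (hg : g.IsHomogeneous (i + c)) :
    ∃ f : MvPolynomial σ k, f.IsHomogeneous i ∧ g - (∑ j, X j) ^ c * f ∈
      (xPowIdeal e).colon (Ideal.span {(∑ j, X j) ^ D} : Ideal (MvPolynomial σ k)) := by
  have hg' : Submodule.Quotient.mk g ∈ grading k e (i + c) := by
    exact_mod_cast mem_grading_natCast.mpr ⟨g, hg, rfl⟩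
  obtain ⟨v, hv, hvg⟩ := isSl2Grading.exists_raise_pow_add_eq hs hg'
  obtain ⟨f, hf, rfl⟩ := mem_grading_natCast.mp hv
  refine ⟨f, hf, ?_⟩
  rw [mem_colon_iff_raise_pow_eq_zero, Submodule.Quotient.mk_sub, map_sub, ← raise_pow_mk,
    ← Module.End.mul_apply, ← pow_add, hvg, sub_self]

end MvPolynomial

theorem stmt11_general (n : ℕ) (k : Type) [Field k] [CharZero k]
    (d : Fin (n + 1) → ℕ)
    (ℓ : MvPolynomial (Fin n) k) (hℓ : ℓ = ∑ i, X i)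
    (G : Ideal (MvPolynomial (Fin n) k))
    (hG : G = (Ideal.span (Set.range fun i : Fin n => X i ^ d i.castSucc)).colon
      (Ideal.span {ℓ ^ d (Fin.last n)})) :
    ∀ i c : ℕ,
      (∀ f : MvPolynomial (Fin n) k, f.IsHomogeneous i → ℓ ^ c * f ∈ G → f ∈ G) ∨
      (∀ g : MvPolynomial (Fin n) k, g.IsHomogeneous (i + c) →
        ∃ f : MvPolynomial (Fin n) k, f.IsHomogeneous i ∧ g - ℓ ^ c * f ∈ G) := by
  subst hℓ hG
  intro i c
  rcases le_total (2 * i + c + d (Fin.last n) : ℤ) (∑ j : Fin n, ((d j.castSucc : ℤ) - 1))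
    with hs | hs
  -- The binder type `Fin n` fixes `σ` up front; leaving it to unification times out.
  · exact .inl fun f hf => mem_colon_of_pow_mul_mem (e := fun j : Fin n => d j.castSucc) hs hf
  · exact .inr fun g hg => exists_sub_pow_mul_mem_colon (e := fun j : Fin n => d j.castSucc) hs hg

/-- For positive integers `d_1,…,d_{n+1}` and
`G = (x_1^{d_1},…,x_n^{d_n}) : (ℓ^{d_{n+1}})`, the algebra `R/G` has the strong
Lefschetz property with `ℓ = x_1 + ⋯ + x_n` as a strong Lefschetz element: for all
`i, c ≥ 0` the multiplication `(R/G)_i → (R/G)_{i+c}` by `ℓ^c` is injective or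
surjective. -/
theorem stmt11 (n : ℕ) (k : Type) [Field k] [CharZero k]
    (d : Fin (n + 1) → ℕ) (hd : ∀ i, 1 ≤ d i)
    (ℓ : MvPolynomial (Fin n) k) (hℓ : ℓ = ∑ i, X i)
    (G : Ideal (MvPolynomial (Fin n) k))
    (hG : G = (Ideal.span (Set.range fun i : Fin n => X i ^ d i.castSucc)).colon
      (Ideal.span {ℓ ^ d (Fin.last n)})) :
    ∀ i c : ℕ,
      (∀ f : MvPolynomial (Fin n) k, f.IsHomogeneous i → ℓ ^ c * f ∈ G → f ∈ G) ∨
      (∀ g : MvPolynomial (Fin n) k, g.IsHomogeneous (i + c) →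
        ∃ f : MvPolynomial (Fin n) k, f.IsHomogeneous i ∧ g - ℓ ^ c * f ∈ G) :=
  stmt11_general n k d ℓ hℓ G hG
end

section
/- Let F ∈ R be a homogeneous form such that R/Ann(F) has the strong Lefschetz property with a linear form λ as a strong Lefschetz element. Then for every integer d > 0, the Artinian Gorenstein algebra R/Ann(λ^d ∘ F) has the strong Lefschetz property with λ as a strong Lefschetz element. -/
open MvPolynomial

/-!
Apolarity is a module action of `R` on itself, `g ∘ (h ∘ F) = (g h) ∘ F` (on monomials this is
`u↓(s+t) = (u-t)↓s · u↓t` for falling factorials). Hence `f ∘ (λ^d ∘ F) = (λ^d f) ∘ F`,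
so multiplication by `λ^c` on `R/Ann(λ^d ∘ F)` from degree `i` is injective (resp. surjective)
as soon as multiplication by `λ^(c+d)` on `R/Ann(F)` from degree `i` is.
-/

/-- The apolarity (contraction) action `g ∘ F`: apply to `F` the differential operator
obtained from `g` by substituting `∂/∂x_i` for `x_i`. -/
noncomputable def apol {n : ℕ} {k : Type} [Field k]
    (g F : MvPolynomial (Fin n) k) : MvPolynomial (Fin n) k :=
  ∑ s ∈ g.support, ∑ u ∈ F.support,
    (g.coeff s * F.coeff u * ∏ i ∈ s.support, ((u i).descFactorial (s i) : k)) •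
      monomial (u - s) (1 : k)

/-- `R/Ann(F)` has the strong Lefschetz property with the linear form `lam` as strong
Lefschetz element: multiplication by `lam^c` from degree `i` to degree `i + c` of
`R/Ann(F)` is injective or surjective, for all `i, c`. -/
def annSLP {n : ℕ} {k : Type} [Field k]
    (lam F : MvPolynomial (Fin n) k) : Prop :=
  ∀ i c : ℕ,
    (∀ f : MvPolynomial (Fin n) k, f.IsHomogeneous i →
      apol (lam ^ c * f) F = 0 → apol f F = 0) ∨
    (∀ g : MvPolynomial (Fin n) k, g.IsHomogeneous (i + c) →
      ∃ f : MvPolynomial (Fin n) k, f.IsHomogeneous i ∧ apol (g - lam ^ c * f) F = 0)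

section Apolarity

variable {n : ℕ} {k : Type} [Field k]

lemma apol_eq_sum_of_support_subset {g F : MvPolynomial (Fin n) k}
    {A B : Finset (Fin n →₀ ℕ)} (hA : g.support ⊆ A) (hB : F.support ⊆ B) :
    apol g F = ∑ s ∈ A, ∑ u ∈ B,
      (g.coeff s * F.coeff u * ∏ i ∈ s.support, ((u i).descFactorial (s i) : k)) •
        monomial (u - s) (1 : k) := by
  unfold apol
  rw [Finset.sum_subset hA fun s _ hs => by simp [notMem_support_iff.mp hs]]
  refine Finset.sum_congr rfl fun s _ => ?_
  exact Finset.sum_subset hB fun u _ hu => by simp [notMem_support_iff.mp hu]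

lemma apol_add_right (g F G : MvPolynomial (Fin n) k) :
    apol g (F + G) = apol g F + apol g G := by
  have hB := Finset.subset_union_left (s₁ := F.support) (s₂ := G.support)
  have hB' := Finset.subset_union_right (s₁ := F.support) (s₂ := G.support)
  rw [apol_eq_sum_of_support_subset subset_rfl support_add,
    apol_eq_sum_of_support_subset subset_rfl hB, apol_eq_sum_of_support_subset subset_rfl hB']
  simp only [coeff_add, mul_add, add_mul, add_smul, Finset.sum_add_distrib]

lemma apol_add_left (g h F : MvPolynomial (Fin n) k) :
    apol (g + h) F = apol g F + apol h F := by
  have hA := Finset.subset_union_left (s₁ := g.support) (s₂ := h.support)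
  have hA' := Finset.subset_union_right (s₁ := g.support) (s₂ := h.support)
  rw [apol_eq_sum_of_support_subset support_add subset_rfl,
    apol_eq_sum_of_support_subset hA subset_rfl, apol_eq_sum_of_support_subset hA' subset_rfl]
  simp only [coeff_add, add_mul, add_smul, Finset.sum_add_distrib]

lemma apol_zero_right (g : MvPolynomial (Fin n) k) : apol g 0 = 0 := by
  simp [apol]

lemma apol_monomial_monomial (s u : Fin n →₀ ℕ) (a b : k) :
    apol (monomial s a) (monomial u b) =
      monomial (u - s) (a * b * ∏ i, ((u i).descFactorial (s i) : k)) := by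
  rw [apol_eq_sum_of_support_subset support_monomial_subset support_monomial_subset]
  simp only [Finset.sum_singleton, coeff_monomial, if_true, smul_monomial, smul_eq_mul, mul_one]
  congr 2
  refine Finset.prod_subset (Finset.subset_univ _) fun i _ hi => ?_
  simp [Finsupp.notMem_support_iff.mp hi]

lemma apol_monomial_apol_monomial (s t u : Fin n →₀ ℕ) (a b c : k) :
    apol (monomial s a) (apol (monomial t b) (monomial u c)) =
      apol (monomial s a * monomial t b) (monomial u c) := by
  simp only [apol_monomial_monomial, monomial_mul, tsub_tsub, add_comm t s]
  congr 1
  have descFactorial_add (i : Fin n) :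
      (u i).descFactorial ((s + t) i) =
        ((u - t) i).descFactorial (s i) * (u i).descFactorial (t i) := by
    simpa using (Nat.descFactorial_mul_descFactorial (n := u i) (Nat.le_add_left (t i) (s i))).symm
  simp only [descFactorial_add, Nat.cast_mul, Finset.prod_mul_distrib]
  ring

theorem apol_apol (g h F : MvPolynomial (Fin n) k) :
    apol g (apol h F) = apol (g * h) F := by
  induction g using induction_on' with
  | add g g' hg hg' => rw [add_mul, apol_add_left, apol_add_left, hg, hg']
  | monomial s a =>
    induction h using induction_on' with
    | add h h' hh hh' => rw [mul_add, apol_add_left, apol_add_right, apol_add_left, hh, hh']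
    | monomial t b =>
      induction F using induction_on' with
      | add F G hF hG => rw [apol_add_right, apol_add_right, apol_add_right, hF, hG]
      | monomial u c => exact apol_monomial_apol_monomial s t u a b c

end Apolarity

theorem stmt13_general (n : ℕ) (k : Type) [Field k]
    (F : MvPolynomial (Fin n) k)
    (lam : MvPolynomial (Fin n) k) (hlam : lam.IsHomogeneous 1)
    (hSLP : annSLP lam F)
    (d : ℕ) :
    annSLP lam (apol (lam ^ d) F) := by
  have shift (f : MvPolynomial (Fin n) k) :
      apol f (apol (lam ^ d) F) = apol (lam ^ d * f) F := by
    rw [apol_apol, mul_comm]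
  intro i c
  rcases hSLP i (c + d) with inj | surj
  · refine Or.inl fun f hf hf0 => ?_
    rw [shift, ← mul_assoc, ← pow_add, add_comm d] at hf0
    rw [shift, ← apol_apol, inj f hf hf0, apol_zero_right]
  · refine Or.inr fun g hg => ?_
    have hg' : (lam ^ d * g).IsHomogeneous (i + (c + d)) := by
      simpa [add_comm, add_left_comm] using (hlam.pow d).mul hg
    obtain ⟨f, hf, hf0⟩ := surj (lam ^ d * g) hg'
    refine ⟨f, hf, ?_⟩
    rwa [shift, mul_sub, ← mul_assoc, ← pow_add, add_comm d]

/-- If `R/Ann(F)` has the SLP with a linear form `lam` as strong Lefschetz element,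
then for every `d > 0` the Artinian Gorenstein algebra `R/Ann(lam^d ∘ F)` has the SLP
with `lam` as a strong Lefschetz element. -/
theorem stmt13 (n : ℕ) (k : Type) [Field k] [CharZero k]
    (F : MvPolynomial (Fin n) k) (D : ℕ) (hF : F.IsHomogeneous D)
    (lam : MvPolynomial (Fin n) k) (hlam : lam.IsHomogeneous 1)
    (hSLP : annSLP lam F)
    (d : ℕ) (hd : 0 < d) :
    annSLP lam (apol (lam ^ d) F) :=
  stmt13_general n k F lam hlam hSLP d
end

section
/- Let n ≥ 1 and 1 ≤ d ≤ n be integers and set l = ⌊(n-d)/2⌋. Then the number of strictly increasing sequences 1 ≤ i_1 < i_2 < ⋯ < i_{l+1} ≤ n satisfying i_j ≤ d + 2(j-1) for all 1 ≤ j ≤ l+1 equals \binom{n}{l+1} - \binom{n}{l+1+d}. -/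
/-!
Induction on `n`. A tuple with entries in `[1, n + 1]` either lies in `[1, n]` or ends in `n + 1`;
dropping that last entry leaves a valid `(k - 1)`-tuple in `[1, n]`, and this is reversible exactly
when `n + 1 ≤ d + 2 (k - 1)`. So the count obeys Pascal's rule, as does `C(n, k) - C(n, k + d)`.
Under `n < 2k + d` the only exception is the boundary `n = d + 2 (k - 1)`, where the missing term
`C(n, k - 1) - C(n, k - 1 + d)` vanishes by the symmetry of binomial coefficients.
-/

open Set

theorem Fin.strictMono_snoc {α : Type*} [Preorder α] {m : ℕ} {g : Fin m → α} {c : α}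
    (hg : StrictMono g) (hc : ∀ i, g i < c) : StrictMono (Fin.snoc g c : Fin (m + 1) → α) := by
  rw [Fin.strictMono_iff_lt_succ]
  intro i
  cases m with
  | zero => exact i.elim0
  | succ m =>
    obtain ⟨j, rfl⟩ | rfl := i.eq_castSucc_or_eq_last
    · rw [Fin.succ_castSucc, Fin.snoc_castSucc, Fin.snoc_castSucc]
      exact hg j.castSucc_lt_succ
    · simpa using hc (Fin.last m)

/-- Indexed from `0`: `f j` is the paper's `i_{j+1}`. -/
def ballotTuples (n k d : ℕ) : Set (Fin k → ℕ) :=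
  {f | StrictMono f ∧ (∀ j, 1 ≤ f j ∧ f j ≤ n) ∧ ∀ j : Fin k, f j ≤ d + 2 * (j : ℕ)}

theorem ballotTuples_finite (n k d : ℕ) : (ballotTuples n k d).Finite :=
  (Finite.pi' fun _ => finite_Icc 1 n).subset fun _ hf j => hf.2.1 j

theorem ballotTuples_zero_right (n d : ℕ) : ballotTuples n 0 d = univ :=
  eq_univ_of_forall fun _ => ⟨fun i => i.elim0, fun j => j.elim0, fun j => j.elim0⟩

theorem ballotTuples_zero_left (k d : ℕ) (hk : 0 < k) : ballotTuples 0 k d = ∅ :=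
  eq_empty_of_forall_notMem fun f hf => by have := (hf.2.1 ⟨0, hk⟩); omega

theorem setOf_last_le_ballotTuples (n m d : ℕ) :
    {f ∈ ballotTuples (n + 1) (m + 1) d | f (Fin.last m) ≤ n} = ballotTuples n (m + 1) d := by
  ext f
  constructor
  · rintro ⟨⟨hmono, hrange, hbound⟩, hlast⟩
    exact ⟨hmono, fun j => ⟨(hrange j).1, (hmono.monotone (Fin.le_last j)).trans hlast⟩, hbound⟩
  · rintro ⟨hmono, hrange, hbound⟩
    exact ⟨⟨hmono, fun j => ⟨(hrange j).1, (hrange j).2.trans n.le_succ⟩, hbound⟩,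
      (hrange (Fin.last m)).2⟩

theorem snoc_mem_ballotTuples {n m d c : ℕ} {g : Fin m → ℕ} (hg : g ∈ ballotTuples n m d)
    (hnc : n < c) (hc : c ≤ d + 2 * m) : Fin.snoc g c ∈ ballotTuples c (m + 1) d := by
  obtain ⟨hmono, hrange, hbound⟩ := hg
  refine ⟨Fin.strictMono_snoc hmono fun i => (hrange i).2.trans_lt hnc, fun j => ?_, fun j => ?_⟩
  · induction j using Fin.lastCases with
    | last => simp only [Fin.snoc_last]; omega
    | cast i => simp only [Fin.snoc_castSucc]; have := hrange i; omega
  · induction j using Fin.lastCases with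
    | last => simpa using hc
    | cast i => simpa using hbound i

theorem init_mem_ballotTuples {n m d : ℕ} {f : Fin (m + 1) → ℕ}
    (hf : f ∈ ballotTuples (n + 1) (m + 1) d) (hlast : f (Fin.last m) = n + 1) :
    Fin.init f ∈ ballotTuples n m d := by
  obtain ⟨hmono, hrange, hbound⟩ := hf
  refine ⟨hmono.comp Fin.strictMono_castSucc, fun j => ⟨(hrange _).1, ?_⟩, fun j => hbound _⟩
  have := hmono (Fin.castSucc_lt_last j)
  simp only [Fin.init]
  omega

theorem setOf_last_eq_ballotTuples_eq_image {n m d : ℕ} (h : n + 1 ≤ d + 2 * m) :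
    {f ∈ ballotTuples (n + 1) (m + 1) d | f (Fin.last m) = n + 1} =
      (Fin.snoc · (n + 1)) '' ballotTuples n m d := by
  ext f
  constructor
  · rintro ⟨hf, hlast⟩
    exact ⟨Fin.init f, init_mem_ballotTuples hf hlast, hlast ▸ Fin.snoc_init_self f⟩
  · rintro ⟨g, hg, rfl⟩
    exact ⟨snoc_mem_ballotTuples hg n.lt_succ_self h, Fin.snoc_last _ _⟩

theorem setOf_last_eq_ballotTuples_eq_empty {n m d : ℕ} (h : d + 2 * m < n + 1) :
    {f ∈ ballotTuples (n + 1) (m + 1) d | f (Fin.last m) = n + 1} = ∅ :=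
  eq_empty_of_forall_notMem fun f ⟨⟨_, _, hbound⟩, hlast⟩ => by
    have := hbound (Fin.last m)
    simp only [Fin.val_last] at this
    omega

theorem ncard_ballotTuples_succ (n m d : ℕ) :
    (ballotTuples (n + 1) (m + 1) d).ncard = (ballotTuples n (m + 1) d).ncard +
      {f ∈ ballotTuples (n + 1) (m + 1) d | f (Fin.last m) = n + 1}.ncard := by
  have hsplit : ballotTuples (n + 1) (m + 1) d =
      {f ∈ ballotTuples (n + 1) (m + 1) d | f (Fin.last m) ≤ n} ∪
        {f ∈ ballotTuples (n + 1) (m + 1) d | f (Fin.last m) = n + 1} := by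
    rw [← sep_or]
    refine (sep_eq_self_iff_mem_true.mpr fun f hf => ?_).symm
    have := (hf.2.1 (Fin.last m)).2
    omega
  have hdisj : Disjoint {f ∈ ballotTuples (n + 1) (m + 1) d | f (Fin.last m) ≤ n}
      {f ∈ ballotTuples (n + 1) (m + 1) d | f (Fin.last m) = n + 1} :=
    disjoint_left.mpr fun f hle heq => by have := hle.2; have := heq.2; omega
  have hfin := ballotTuples_finite (n + 1) (m + 1) d
  conv_lhs => rw [hsplit]
  rw [ncard_union_eq hdisj (hfin.subset (sep_subset _ _)) (hfin.subset (sep_subset _ _)),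
    setOf_last_le_ballotTuples]

theorem ncard_ballotTuples_zero_right {n d : ℕ} (h : n < d) :
    ((ballotTuples n 0 d).ncard : ℤ) = n.choose 0 - n.choose (0 + d) := by
  rw [ballotTuples_zero_right, ncard_univ, Nat.card_unique, Nat.choose_zero_right,
    Nat.choose_eq_zero_of_lt (by omega)]
  rfl

theorem ncard_ballotTuples {n k d : ℕ} (h : n < 2 * k + d) :
    ((ballotTuples n k d).ncard : ℤ) = n.choose k - n.choose (k + d) := by
  induction n generalizing k with
  | zero =>
    cases k with
    | zero => exact ncard_ballotTuples_zero_right (by omega)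
    | succ m =>
      rw [ballotTuples_zero_left _ _ m.succ_pos, Nat.choose_eq_zero_of_lt m.succ_pos,
        Nat.choose_eq_zero_of_lt (by omega), ncard_empty]
      rfl
  | succ n ih =>
    cases k with
    | zero => exact ncard_ballotTuples_zero_right (by omega)
    | succ m =>
      have hpascal : (n + 1).choose (m + 1 + d) = n.choose (m + d) + n.choose (m + 1 + d) := by
        rw [show m + 1 + d = m + d + 1 by omega, Nat.choose_succ_succ]
      rw [ncard_ballotTuples_succ, Nat.cast_add, ih (by omega), Nat.choose_succ_succ', hpascal]
      rcases le_or_gt (n + 1) (d + 2 * m) with hle | hlt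
      · rw [setOf_last_eq_ballotTuples_eq_image hle,
          ncard_image_of_injective _ (Fin.snoc_left_injective (α := fun _ => ℕ) _), ih (by omega)]
        push_cast
        ring
      · have hsymm : n.choose m = n.choose (m + d) := by
          rw [← Nat.choose_symm (by omega : m ≤ n), show n - m = m + d by omega]
        rw [setOf_last_eq_ballotTuples_eq_empty hlt, ncard_empty, hsymm]
        push_cast
        ring

theorem stmt18_general (n d : ℕ) (l : ℕ) (hl : l = (n - d) / 2) :
    (({f : Fin (l + 1) → ℕ | StrictMono f ∧ (∀ j, 1 ≤ f j ∧ f j ≤ n) ∧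
        ∀ j : Fin (l + 1), f j ≤ d + 2 * (j : ℕ)}.ncard : ℤ))
      = (n.choose (l + 1) : ℤ) - (n.choose (l + 1 + d) : ℤ) :=
  ncard_ballotTuples (by omega)

/-- For `1 ≤ d ≤ n` and `l = ⌊(n-d)/2⌋`, the number of strictly increasing sequences
`1 ≤ i_1 < ⋯ < i_{l+1} ≤ n` with `i_j ≤ d + 2(j-1)` for all `j` equals
`binom(n, l+1) - binom(n, l+1+d)`. -/
theorem stmt18 (n d : ℕ) (hn : 1 ≤ n) (hd1 : 1 ≤ d) (hdn : d ≤ n)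
    (l : ℕ) (hl : l = (n - d) / 2) :
    (({f : Fin (l + 1) → ℕ | StrictMono f ∧ (∀ j, 1 ≤ f j ∧ f j ≤ n) ∧
        ∀ j : Fin (l + 1), f j ≤ d + 2 * (j : ℕ)}.ncard : ℤ))
      = (n.choose (l + 1) : ℤ) - (n.choose (l + 1 + d) : ℤ) :=
  stmt18_general n d l hl
end
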